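/- arXiv:1701.05065 — 2 statements merged into one kernel-verified Lean document; each statement's English description precedes it below -/
import Mathlib

section
/- For every trimming level α ∈ (0,1), the α-trimmed Bayes error satisfies Err_α(P) = (Err(P) − α)_+ / (1 − α); moreover Err_α(P), which is defined as the infimum over Q ∈ 𝓡_α(P) of the Bayes error Err(Q), coincides with the infimum over all classifiers g of the trimmed classification error R_α(g). -/
open MeasureTheory

noncomputable section

/-- The classification error `R(g) = P({(y,x) : g(x) ≠ y})`. -/
def classErr {p : ℕ} (P : Measure (Bool × (Fin p → ℝ))) (g : (Fin p → ℝ) → Bool) : ℝ :=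
  (P {z | g z.2 ≠ z.1}).toReal

/-- The set of `α`-trimmed versions of a measure `μ`. -/
def trimmedSet {Ω : Type*} [MeasurableSpace Ω] (μ : Measure Ω) (α : ℝ) :
    Set (Measure Ω) :=
  {ν | IsProbabilityMeasure ν ∧ ν ≪ μ ∧
    ∀ᵐ z ∂μ, ν.rnDeriv μ z ≤ ENNReal.ofReal (1 / (1 - α))}

/-- The trimmed classification error `R_α(g) = inf_{Q ∈ 𝓡_α(P)} Q(g(x) ≠ y)`. -/
def trimmedErr {p : ℕ} (P : Measure (Bool × (Fin p → ℝ))) (α : ℝ)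
    (g : (Fin p → ℝ) → Bool) : ℝ :=
  sInf ((fun Q => (Q {z | g z.2 ≠ z.1}).toReal) '' trimmedSet P α)

/-- The Bayes error `Err(Q) = inf_g Q(g(x) ≠ y)`, infimum over measurable classifiers. -/
def bayesErr {p : ℕ} (Q : Measure (Bool × (Fin p → ℝ))) : ℝ :=
  sInf ((fun g => classErr Q g) '' {g : (Fin p → ℝ) → Bool | Measurable g})

/-- The `α`-trimmed Bayes error `Err_α(P) = inf_{Q ∈ 𝓡_α(P)} Err(Q)`. -/
def trimmedBayesErr {p : ℕ} (P : Measure (Bool × (Fin p → ℝ))) (α : ℝ) : ℝ :=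
  sInf (bayesErr '' trimmedSet P α)

/-!
An `α`-trimmed version `Q` of `P` has density at most `1 / (1 - α)`, so `Q Aᶜ ≤ P Aᶜ / (1 - α)`,
i.e. `Q A ≥ (P A - α)₊ / (1 - α)`; a density that is constant on `A` and on `Aᶜ` attains this
bound. Applied to the misclassification set of `g`, this gives `R_α(g) = (R(g) - α)₊ / (1 - α)`.
The trimmed Bayes error is an infimum over `Q` and `g`, which may be taken in either order, and
`t ↦ (t - α)₊ / (1 - α)` is monotone and continuous, so it commutes with the infimum over `g`.
-/

/-- The least mass that an `α`-trimmed version of a probability measure can give to a set of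
mass `t`. -/
def trimmedMass (α t : ℝ) : ℝ := max (t - α) 0 / (1 - α)

section TrimmedMass

variable {α : ℝ}

lemma trimmedMass_nonneg (hα : α < 1) (t : ℝ) : 0 ≤ trimmedMass α t :=
  div_nonneg (le_max_right _ _) (sub_nonneg.2 hα.le)

lemma monotone_trimmedMass (hα : α < 1) : Monotone (trimmedMass α) := fun _ _ h =>
  div_le_div_of_nonneg_right (max_le_max (sub_le_sub_right h α) le_rfl) (sub_nonneg.2 hα.le)

lemma continuous_trimmedMass : Continuous (trimmedMass α) :=
  ((continuous_id.sub continuous_const).max continuous_const).div_const _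

end TrimmedMass

section TrimmedSet

variable {Ω : Type*} [MeasurableSpace Ω] {P Q : Measure Ω} {α : ℝ}

lemma self_mem_trimmedSet [IsProbabilityMeasure P] (hα0 : 0 ≤ α) (hα1 : α < 1) :
    P ∈ trimmedSet P α := by
  refine ⟨inferInstance, Measure.AbsolutelyContinuous.rfl, ?_⟩
  filter_upwards [Measure.rnDeriv_self P] with z hz
  rw [hz, ENNReal.one_le_ofReal, le_div_iff₀ (by linarith)]
  linarith

lemma apply_le_of_mem_trimmedSet [SigmaFinite P] (hQ : Q ∈ trimmedSet P α) (s : Set Ω) :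
    Q s ≤ ENNReal.ofReal (1 / (1 - α)) * P s := by
  have := hQ.1
  calc Q s = ∫⁻ x in s, Q.rnDeriv P x ∂P := (Measure.setLIntegral_rnDeriv hQ.2.1 s).symm
    _ ≤ ∫⁻ _ in s, ENNReal.ofReal (1 / (1 - α)) ∂P := lintegral_mono_ae (ae_restrict_of_ae hQ.2.2)
    _ = ENNReal.ofReal (1 / (1 - α)) * P s := setLIntegral_const _ _

lemma trimmedMass_le_of_mem_trimmedSet [IsProbabilityMeasure P] (hα1 : α < 1)
    (hQ : Q ∈ trimmedSet P α) {A : Set Ω} (hA : MeasurableSet A) :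
    trimmedMass α (P.real A) ≤ Q.real A := by
  have := hQ.1
  have h1α : 0 < 1 - α := by linarith
  have hAc : Q.real Aᶜ ≤ 1 / (1 - α) * P.real Aᶜ := by
    have := ENNReal.toReal_mono (by finiteness) (apply_le_of_mem_trimmedSet hQ Aᶜ)
    rwa [ENNReal.toReal_mul, ENNReal.toReal_ofReal (by positivity)] at this
  rw [probReal_compl_eq_one_sub hA, probReal_compl_eq_one_sub hA, one_div_mul_eq_div,
    le_div_iff₀ h1α] at hAc
  rw [trimmedMass, div_le_iff₀ h1α]
  exact max_le (by linarith) (by positivity)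

lemma withDensity_mem_trimmedSet [SigmaFinite P] {f : Ω → ENNReal} (hf : Measurable f)
    (hf_le : ∀ x, f x ≤ ENNReal.ofReal (1 / (1 - α))) [IsProbabilityMeasure (P.withDensity f)] :
    P.withDensity f ∈ trimmedSet P α :=
  ⟨inferInstance, withDensity_absolutelyContinuous P f,
    (Measure.rnDeriv_withDensity P hf).mono fun x hx => hx.trans_le (hf_le x)⟩

lemma ofReal_div_measureReal_mul [IsFiniteMeasure P] {s : Set Ω} {σ : ℝ}
    (hσ : P.real s = 0 → σ = 0) : ENNReal.ofReal (σ / P.real s) * P s = ENNReal.ofReal σ := by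
  rw [← ofReal_measureReal, ← ENNReal.ofReal_mul' measureReal_nonneg, div_mul_cancel_of_imp hσ]

lemma div_measureReal_le [IsFiniteMeasure P] (hα1 : α < 1) {s : Set Ω} {σ : ℝ}
    (hσ : σ ≤ P.real s / (1 - α)) : σ / P.real s ≤ 1 / (1 - α) :=
  div_le_of_le_mul₀ measureReal_nonneg (one_div_nonneg.2 (by linarith))
    (by rwa [one_div_mul_eq_div])

/-- The witness has a density constant on `A` and on `Aᶜ`. -/
lemma exists_mem_trimmedSet_measureReal_eq [IsProbabilityMeasure P] (hα1 : α < 1)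
    {A : Set Ω} (hA : MeasurableSet A) {τ : ℝ} (hτ0 : 0 ≤ τ) (hτ1 : τ ≤ 1)
    (hτA : τ ≤ P.real A / (1 - α)) (hτAc : 1 - τ ≤ P.real Aᶜ / (1 - α)) :
    ∃ Q ∈ trimmedSet P α, Q.real A = τ := by
  classical
  have h1α : 0 < 1 - α := by linarith
  have hvanish {s : Set Ω} {σ : ℝ} (hσ0 : 0 ≤ σ) (hσ : σ ≤ P.real s / (1 - α)) :
      P.real s = 0 → σ = 0 := fun h => by
    rw [h, zero_div] at hσ
    exact le_antisymm hσ hσ0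
  set f : Ω → ENNReal := A.piecewise (fun _ => ENNReal.ofReal (τ / P.real A))
    (fun _ => ENNReal.ofReal ((1 - τ) / P.real Aᶜ))
  have hf : Measurable f := Measurable.piecewise hA measurable_const measurable_const
  have hQA : P.withDensity f A = ENNReal.ofReal τ := by
    rw [withDensity_apply _ hA,
      setLIntegral_congr_fun hA fun x hx => Set.piecewise_eq_of_mem A _ _ hx,
      setLIntegral_const, ofReal_div_measureReal_mul (hvanish hτ0 hτA)]
  have hQAc : P.withDensity f Aᶜ = ENNReal.ofReal (1 - τ) := by
    rw [withDensity_apply _ hA.compl,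
      setLIntegral_congr_fun hA.compl fun x hx => Set.piecewise_eq_of_notMem A _ _ hx,
      setLIntegral_const, ofReal_div_measureReal_mul (hvanish (by linarith) hτAc)]
  have : IsProbabilityMeasure (P.withDensity f) := ⟨by
    rw [← measure_add_measure_compl hA, hQA, hQAc, ← ENNReal.ofReal_add hτ0 (by linarith),
      add_sub_cancel, ENNReal.ofReal_one]⟩
  have hf_le : f ≤ fun _ => ENNReal.ofReal (1 / (1 - α)) := Set.piecewise_le
    (fun _ _ => ENNReal.ofReal_le_ofReal (div_measureReal_le hα1 hτA))
    (fun _ _ => ENNReal.ofReal_le_ofReal (div_measureReal_le hα1 hτAc))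
  exact ⟨_, withDensity_mem_trimmedSet hf hf_le, by
    rw [measureReal_def, hQA, ENNReal.toReal_ofReal hτ0]⟩

lemma isLeast_trimmedSet_measureReal [IsProbabilityMeasure P] (hα0 : 0 ≤ α) (hα1 : α < 1)
    {A : Set Ω} (hA : MeasurableSet A) :
    IsLeast ((fun Q => Q.real A) '' trimmedSet P α) (trimmedMass α (P.real A)) := by
  have h1α : 0 < 1 - α := by linarith
  have hp0 : 0 ≤ P.real A := measureReal_nonneg
  have hp1 : P.real A ≤ 1 := measureReal_le_one
  refine ⟨?_, fun _ ⟨Q, hQ, hQA⟩ => hQA ▸ trimmedMass_le_of_mem_trimmedSet hα1 hQ hA⟩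
  exact exists_mem_trimmedSet_measureReal_eq hα1 hA (trimmedMass_nonneg hα1 _)
    (div_le_one_of_le₀ (max_le (by linarith) h1α.le) h1α.le)
    (div_le_div_of_nonneg_right (max_le (by linarith) hp0) h1α.le)
    (by
      rw [probReal_compl_eq_one_sub hA, trimmedMass, le_div_iff₀ h1α, sub_mul,
        div_mul_cancel₀ _ h1α.ne']
      linarith [le_max_left (P.real A - α) 0])

end TrimmedSet

lemma csInf_image_csInf_image_le {ι κ : Type*} {s : Set ι} {t : Set κ} {f : ι → κ → ℝ}
    (hf : ∀ i j, 0 ≤ f i j) (hs : s.Nonempty) (ht : t.Nonempty) :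
    sInf ((fun i => sInf (f i '' t)) '' s) ≤ sInf ((fun j => sInf ((f · j) '' s)) '' t) := by
  refine le_csInf (ht.image _) ?_
  rintro _ ⟨j, hj, rfl⟩
  refine le_csInf (hs.image _) ?_
  rintro _ ⟨i, hi, rfl⟩
  have hbdd : BddBelow ((fun i => sInf (f i '' t)) '' s) := ⟨0, by
    rintro _ ⟨i, -, rfl⟩
    exact Real.sInf_nonneg (by rintro _ ⟨j, -, rfl⟩; exact hf i j)⟩
  exact (csInf_le hbdd ⟨i, hi, rfl⟩).trans
    (csInf_le ⟨0, by rintro _ ⟨j, -, rfl⟩; exact hf i j⟩ ⟨j, hj, rfl⟩)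

lemma csInf_image_csInf_image_comm {ι κ : Type*} {s : Set ι} {t : Set κ} {f : ι → κ → ℝ}
    (hf : ∀ i j, 0 ≤ f i j) (hs : s.Nonempty) (ht : t.Nonempty) :
    sInf ((fun i => sInf (f i '' t)) '' s) = sInf ((fun j => sInf ((f · j) '' s)) '' t) :=
  le_antisymm (csInf_image_csInf_image_le hf hs ht)
    (csInf_image_csInf_image_le (f := fun j i => f i j) (fun j i => hf i j) ht hs)

lemma measurableSet_misclassified {X : Type*} [MeasurableSpace X] {g : X → Bool}
    (hg : Measurable g) : MeasurableSet {z : Bool × X | g z.2 ≠ z.1} :=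
  (measurableSet_eq_fun (hg.comp measurable_snd) measurable_fst).compl

section Classification

variable {p : ℕ} {P : Measure (Bool × (Fin p → ℝ))} [IsProbabilityMeasure P] {α : ℝ}

lemma trimmedErr_eq_trimmedMass (hα0 : 0 ≤ α) (hα1 : α < 1) {g : (Fin p → ℝ) → Bool}
    (hg : Measurable g) : trimmedErr P α g = trimmedMass α (classErr P g) :=
  (isLeast_trimmedSet_measureReal hα0 hα1 (measurableSet_misclassified hg)).csInf_eq

lemma trimmedMass_bayesErr (hα0 : 0 ≤ α) (hα1 : α < 1) :
    trimmedMass α (bayesErr P) =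
      sInf ((fun g => trimmedErr P α g) '' {g : (Fin p → ℝ) → Bool | Measurable g}) := by
  have hne : ((fun g => classErr P g) '' {g : (Fin p → ℝ) → Bool | Measurable g}).Nonempty :=
    ⟨_, fun _ => true, measurable_const, rfl⟩
  rw [bayesErr, (monotone_trimmedMass hα1).map_csInf_of_continuousAt
      continuous_trimmedMass.continuousAt hne
      ⟨0, by rintro _ ⟨g, -, rfl⟩; exact ENNReal.toReal_nonneg⟩, Set.image_image]
  exact congrArg sInf (Set.image_congr fun g hg => (trimmedErr_eq_trimmedMass hα0 hα1 hg).symm)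

/-- Trimming and choosing the classifier are two infima, which commute. -/
lemma trimmedBayesErr_eq_sInf_trimmedErr (hα0 : 0 ≤ α) (hα1 : α < 1) :
    trimmedBayesErr P α =
      sInf ((fun g => trimmedErr P α g) '' {g : (Fin p → ℝ) → Bool | Measurable g}) := by
  unfold trimmedBayesErr bayesErr classErr trimmedErr
  exact csInf_image_csInf_image_comm (s := trimmedSet P α) (t := {g | Measurable g})
    (f := fun Q g => (Q {z | g z.2 ≠ z.1}).toReal)
    (fun _ _ => ENNReal.toReal_nonneg) ⟨P, self_mem_trimmedSet hα0 hα1⟩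
    ⟨fun _ => true, measurable_const⟩

end Classification

/-- Proposition 2: `Err_α(P) = (Err(P) − α)_+/(1 − α)`, and moreover the `α`-trimmed
Bayes error coincides with the infimum over classifiers of the trimmed error. -/
theorem trimmedBayesErr_eq {p : ℕ} (P : Measure (Bool × (Fin p → ℝ)))
    [IsProbabilityMeasure P] {α : ℝ} (hα : α ∈ Set.Ioo (0 : ℝ) 1) :
    trimmedBayesErr P α = max (bayesErr P - α) 0 / (1 - α) ∧
    trimmedBayesErr P α =
      sInf ((fun g => trimmedErr P α g) '' {g : (Fin p → ℝ) → Bool | Measurable g}) := by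
  have hswap := trimmedBayesErr_eq_sInf_trimmedErr (P := P) hα.1.le hα.2
  exact ⟨hswap.trans (trimmedMass_bayesErr hα.1.le hα.2).symm, hswap⟩

end
end

section
/- Let (Y_1,X_1),…,(Y_n,X_n) be i.i.d. with law P on {0,1}×ℝ^p, let g be a classifier and α ∈ (0,1) a trimming level. Then E[R_{n,α}(g)] − R_α(g) ≤ √(R(g)) / (√(2n) (1−α)). -/
/-!
Let `A = {(y, x) | g x ≠ y}` and `R = P(A)`. Any `α`-trimming `Q` of `P` has density at most
`1/(1-α)`, so `Q(Aᶜ) ≤ P(Aᶜ)/(1-α)`, i.e. `Q(A) ≥ (R - α)/(1-α)`; hence `R_α(g) ≥ (R - α)₊/(1-α)`.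
The empirical error `R̄` is the mean of `n` i.i.d. Bernoulli(`R`) variables, so `E R̄ = R` and
`Var R̄ ≤ R/n`. Pointwise `(R̄ - α)₊ ≤ (R - α)₊ + (R̄ - R)₊`, and since `R̄ - R` is centred,
`E (R̄ - R)₊ = E |R̄ - R| / 2 ≤ √(Var R̄) / 2 ≤ √R / √(2n)`.
-/

open MeasureTheory ProbabilityTheory

noncomputable section

/-- Empirical classification error `R_n(g) = (1/n) Σ_i 1{g(X_i) ≠ Y_i}`. -/
def empErr {p : ℕ} (n : ℕ) (ξ : Fin n → Bool × (Fin p → ℝ))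
    (g : (Fin p → ℝ) → Bool) : ℝ :=
  (1 / n) * ∑ i, if g (ξ i).2 ≠ (ξ i).1 then (1 : ℝ) else 0

open scoped ENNReal

section TrimmedSet

variable {Ω : Type*} [MeasurableSpace Ω] {μ ν : Measure Ω} {α : ℝ}

lemma self_mem_trimmedSet_s5 [IsProbabilityMeasure μ] (hα₀ : 0 ≤ α) (hα₁ : α < 1) :
    μ ∈ trimmedSet μ α := by
  refine ⟨‹_›, .rfl, ?_⟩
  filter_upwards [Measure.rnDeriv_self μ] with z hz
  rw [hz, ← ENNReal.ofReal_one]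
  exact ENNReal.ofReal_le_ofReal (one_le_one_div (by linarith) (by linarith))

lemma measure_le_of_mem_trimmedSet [SigmaFinite μ] (hν : ν ∈ trimmedSet μ α) {s : Set Ω}
    (hs : MeasurableSet s) : ν s ≤ ENNReal.ofReal (1 / (1 - α)) * μ s := by
  obtain ⟨_, hνμ, hdens⟩ := hν
  calc ν s = ∫⁻ z in s, ν.rnDeriv μ z ∂μ := (Measure.setLIntegral_rnDeriv' hνμ hs).symm
    _ ≤ ∫⁻ _ in s, ENNReal.ofReal (1 / (1 - α)) ∂μ := lintegral_mono_ae (ae_restrict_of_ae hdens)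
    _ = ENNReal.ofReal (1 / (1 - α)) * μ s := setLIntegral_const s _

lemma max_sub_div_le_measureReal_of_mem_trimmedSet [IsProbabilityMeasure μ] (hα₁ : α < 1)
    (hν : ν ∈ trimmedSet μ α) {s : Set Ω} (hs : MeasurableSet s) :
    max (μ.real s - α) 0 / (1 - α) ≤ ν.real s := by
  have : IsProbabilityMeasure ν := hν.1
  have hα : 0 < 1 - α := sub_pos.2 hα₁
  have hcompl : ν.real sᶜ ≤ 1 / (1 - α) * μ.real sᶜ := by
    have := ENNReal.toReal_mono (by finiteness) (measure_le_of_mem_trimmedSet hν hs.compl)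
    rwa [ENNReal.toReal_mul, ENNReal.toReal_ofReal (by positivity)] at this
  rw [probReal_compl_eq_one_sub hs, probReal_compl_eq_one_sub hs, one_div_mul_eq_div,
    le_div_iff₀ hα] at hcompl
  rw [div_le_iff₀ hα]
  exact max_le (by nlinarith) (by positivity)

end TrimmedSet

section Deviation

variable {Ω : Type*} [MeasurableSpace Ω] {μ : Measure Ω}

lemma variance_mean_le_of_iIndepFun {ι : Type*} [Fintype ι] {f : ι → Ω → ℝ}
    (hf : ∀ i, MemLp (f i) 2 μ) (hind : iIndepFun f μ) {v : ℝ} (hv : ∀ i, Var[f i; μ] ≤ v) :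
    Var[fun ω => 1 / (Fintype.card ι : ℝ) * ∑ i, f i ω; μ] ≤ v / Fintype.card ι := by
  set c : ℝ := (Fintype.card ι : ℝ)
  calc Var[fun ω => 1 / c * ∑ i, f i ω; μ] = (1 / c) ^ 2 * ∑ i, Var[f i; μ] := by
        rw [variance_const_mul, ← IndepFun.variance_sum (fun i _ => hf i)
          fun i _ j _ hij => hind.indepFun hij]
        congr with ω
        rw [Finset.sum_apply]
    _ ≤ (1 / c) ^ 2 * (c * v) := by
        gcongr
        simpa using Finset.sum_le_card_nsmul Finset.univ _ v fun i _ => hv i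
    _ = v / c := by
        rcases eq_or_ne c 0 with hc | hc
        · simp [hc]
        · field_simp

variable [IsProbabilityMeasure μ] {X : Ω → ℝ}

lemma integral_abs_sub_integral_le_sqrt_variance (hX : MemLp X 2 μ) :
    ∫ ω, |X ω - μ[X]| ∂μ ≤ √Var[X; μ] := by
  set Y := fun ω => |X ω - μ[X]|
  have hY : MemLp Y 2 μ := (hX.sub (memLp_const _)).abs
  have hY_sq : μ[Y ^ 2] = Var[X; μ] := by
    simp only [Y, Pi.pow_apply, sq_abs]
    exact (variance_eq_integral hX.aemeasurable).symm
  have := variance_nonneg Y μ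
  rw [variance_eq_sub hY, hY_sq, sub_nonneg] at this
  exact (le_abs_self _).trans (Real.abs_le_sqrt this)

lemma integral_max_sub_integral_zero_eq (hX : Integrable X μ) :
    ∫ ω, max (X ω - μ[X]) 0 ∂μ = (∫ ω, |X ω - μ[X]| ∂μ) / 2 := by
  have hcentred : Integrable (fun ω => X ω - μ[X]) μ := hX.sub (integrable_const _)
  have hmean : ∫ ω, (X ω - μ[X]) ∂μ = 0 := by
    rw [integral_sub hX (integrable_const _)]
    simp
  calc ∫ ω, max (X ω - μ[X]) 0 ∂μ = ∫ ω, ((X ω - μ[X]) + |X ω - μ[X]|) / 2 ∂μ := by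
        congr with ω
        rcases le_total 0 (X ω - μ[X]) with h | h
        · rw [max_eq_left h, abs_of_nonneg h]; ring
        · rw [max_eq_right h, abs_of_nonpos h]; ring
    _ = (∫ ω, |X ω - μ[X]| ∂μ) / 2 := by
        rw [integral_div, integral_add hcentred hcentred.abs, hmean, zero_add]

lemma integral_max_sub_le (hX : MemLp X 2 μ) (a : ℝ) :
    ∫ ω, max (X ω - a) 0 ∂μ ≤ max (μ[X] - a) 0 + √Var[X; μ] / 2 := by
  have hX₁ := hX.integrable one_le_two
  have hdev : Integrable (fun ω => max (X ω - μ[X]) 0) μ := (hX₁.sub (integrable_const _)).pos_part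
  calc ∫ ω, max (X ω - a) 0 ∂μ
      ≤ ∫ ω, (max (μ[X] - a) 0 + max (X ω - μ[X]) 0) ∂μ := by
        refine integral_mono (hX₁.sub (integrable_const _)).pos_part
          ((integrable_const _).add hdev) fun ω => ?_
        exact max_le (by linarith [le_max_left (μ[X] - a) 0, le_max_left (X ω - μ[X]) 0])
          (by positivity)
    _ = max (μ[X] - a) 0 + (∫ ω, |X ω - μ[X]| ∂μ) / 2 := by
        rw [integral_add (integrable_const _) hdev, integral_max_sub_integral_zero_eq hX₁]
        simp
    _ ≤ max (μ[X] - a) 0 + √Var[X; μ] / 2 := by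
        gcongr
        exact integral_abs_sub_integral_le_sqrt_variance hX

lemma memLp_indicator_one {t : Set Ω} (q : ℝ≥0∞) (ht : MeasurableSet t) :
    MemLp (t.indicator (1 : Ω → ℝ)) q μ :=
  memLp_indicator_const q ht 1 (.inr (by finiteness))

lemma variance_indicator_one_le {t : Set Ω} (ht : MeasurableSet t) :
    Var[t.indicator 1; μ] ≤ μ.real t := by
  calc Var[t.indicator 1; μ] ≤ μ[t.indicator 1 ^ 2] :=
        variance_le_expectation_sq (measurable_const.indicator ht).aestronglyMeasurable
    _ = μ.real t := by
        rw [← integral_indicator_one ht]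
        congr with ω
        by_cases h : ω ∈ t <;> simp [h]

end Deviation

section Sample

variable {Ω E : Type*} [MeasurableSpace Ω] [MeasurableSpace E] {μ : Measure Ω}
  [IsProbabilityMeasure μ] {P : Measure E} {n : ℕ} {ξ : Fin n → Ω → E} {s : Set E}

def empFreq (ξ : Fin n → Ω → E) (s : Set E) (ω : Ω) : ℝ :=
  1 / (n : ℝ) * ∑ i, (ξ i ⁻¹' s).indicator 1 ω

lemma memLp_empFreq (hξ : ∀ i, Measurable (ξ i)) (hs : MeasurableSet s) :
    MemLp (empFreq ξ s) 2 μ :=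
  (memLp_finsetSum _ fun i _ => memLp_indicator_one 2 (hξ i hs)).const_mul _

lemma integral_empFreq (hn : 0 < n) (hξ : ∀ i, Measurable (ξ i)) (hlaw : ∀ i, μ.map (ξ i) = P)
    (hs : MeasurableSet s) : μ[empFreq ξ s] = P.real s := by
  have hterm : ∀ i, μ[(ξ i ⁻¹' s).indicator 1] = P.real s := fun i => by
    rw [integral_indicator_one (hξ i hs), ← map_measureReal_apply (hξ i) hs, hlaw i]
  unfold empFreq
  rw [integral_const_mul, integral_finsetSum _ fun i _ => (integrable_indicator_iff (hξ i hs)).2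
    (integrable_const _).integrableOn]
  simp only [hterm, Finset.sum_const, Finset.card_univ, Fintype.card_fin, nsmul_eq_mul]
  field_simp

lemma variance_empFreq_le (hξ : ∀ i, Measurable (ξ i)) (hind : iIndepFun ξ μ)
    (hlaw : ∀ i, μ.map (ξ i) = P) (hs : MeasurableSet s) :
    Var[empFreq ξ s; μ] ≤ P.real s / n := by
  have hind' : iIndepFun (fun i => (ξ i ⁻¹' s).indicator (1 : Ω → ℝ)) μ :=
    hind.comp (fun _ => s.indicator 1) fun _ => measurable_const.indicator hs
  have hvar : ∀ i, Var[(ξ i ⁻¹' s).indicator 1; μ] ≤ P.real s := fun i =>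
    (variance_indicator_one_le (hξ i hs)).trans_eq <| by
      rw [← map_measureReal_apply (hξ i) hs, hlaw i]
  have := variance_mean_le_of_iIndepFun (fun i => memLp_indicator_one 2 (hξ i hs)) hind' hvar
  rw [Fintype.card_fin] at this
  exact this

end Sample

section Classification

variable {p : ℕ}

def misclassified (g : (Fin p → ℝ) → Bool) : Set (Bool × (Fin p → ℝ)) :=
  {z | g z.2 ≠ z.1}

lemma measurableSet_misclassified_s5 {g : (Fin p → ℝ) → Bool} (hg : Measurable g) :
    MeasurableSet (misclassified g) :=
  (measurableSet_eq_fun (hg.comp measurable_snd) measurable_fst).compl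

lemma classErr_eq_measureReal (P : Measure (Bool × (Fin p → ℝ))) (g : (Fin p → ℝ) → Bool) :
    classErr P g = P.real (misclassified g) :=
  rfl

lemma empErr_eq_empFreq {Ω : Type*} {n : ℕ} (ξ : Fin n → Ω → Bool × (Fin p → ℝ))
    (g : (Fin p → ℝ) → Bool) (ω : Ω) :
    empErr n (fun i => ξ i ω) g = empFreq ξ (misclassified g) ω := by
  simp [empErr, empFreq, misclassified, Set.indicator_apply]

lemma max_sub_div_le_trimmedErr (P : Measure (Bool × (Fin p → ℝ))) [IsProbabilityMeasure P]
    {α : ℝ} (hα : α ∈ Set.Ioo (0 : ℝ) 1) {g : (Fin p → ℝ) → Bool} (hg : Measurable g) :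
    max (classErr P g - α) 0 / (1 - α) ≤ trimmedErr P α g := by
  refine le_csInf ⟨_, Set.mem_image_of_mem _ (self_mem_trimmedSet_s5 hα.1.le hα.2)⟩ ?_
  rintro _ ⟨Q, hQ, rfl⟩
  exact max_sub_div_le_measureReal_of_mem_trimmedSet hα.2 hQ (measurableSet_misclassified_s5 hg)

end Classification

lemma sqrt_div_two_le_sqrt_div_sqrt_two_mul {r x : ℝ} (hr : 0 ≤ r) (hx : 0 < x) :
    √(r / x) / 2 ≤ √r / √(2 * x) := by
  have h4 : (2 : ℝ) = √4 := by norm_num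
  conv_lhs => rw [h4, ← Real.sqrt_div' _ (by norm_num), div_div]
  rw [← Real.sqrt_div' r (by positivity)]
  exact Real.sqrt_le_sqrt (div_le_div_of_nonneg_left hr (by positivity) (by linarith))

/-- Proposition 3 (upper bound): for an i.i.d. sample with law `P`,
`E[R_{n,α}(g)] − R_α(g) ≤ √(R(g)) / (√(2n) (1−α))`, where
`R_{n,α}(g) = (R_n(g) − α)_+/(1−α)`. -/
theorem expectation_sub_trimmedErr_le {p : ℕ}
    (P : Measure (Bool × (Fin p → ℝ))) [IsProbabilityMeasure P]
    {α : ℝ} (hα : α ∈ Set.Ioo (0 : ℝ) 1)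
    {g : (Fin p → ℝ) → Bool} (hg : Measurable g)
    {Ω : Type*} [MeasurableSpace Ω] (μ : Measure Ω) [IsProbabilityMeasure μ]
    {n : ℕ} (hn : 0 < n) (ξ : Fin n → Ω → Bool × (Fin p → ℝ))
    (hmeas : ∀ i, Measurable (ξ i))
    (hindep : iIndepFun ξ μ)
    (hlaw : ∀ i, μ.map (ξ i) = P) :
    (∫ ω, max (empErr n (fun i => ξ i ω) g - α) 0 / (1 - α) ∂μ) - trimmedErr P α g ≤
      Real.sqrt (classErr P g) / (Real.sqrt (2 * n) * (1 - α)) := by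
  have hA := measurableSet_misclassified_s5 hg
  have hdev := integral_max_sub_le (memLp_empFreq hmeas hA (μ := μ)) α
  rw [integral_empFreq hn hmeas hlaw hA, ← classErr_eq_measureReal] at hdev
  have hsd : √Var[empFreq ξ (misclassified g); μ] / 2 ≤ √(classErr P g) / √(2 * n) :=
    calc √Var[empFreq ξ (misclassified g); μ] / 2 ≤ √(classErr P g / n) / 2 := by
          gcongr
          exact variance_empFreq_le hmeas hindep hlaw hA
      _ ≤ √(classErr P g) / √(2 * n) :=
          sqrt_div_two_le_sqrt_div_sqrt_two_mul ENNReal.toReal_nonneg (by exact_mod_cast hn)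
  have htrim := max_sub_div_le_trimmedErr P hα hg
  have hα₁ : 0 < 1 - α := sub_pos.2 hα.2
  simp_rw [empErr_eq_empFreq, integral_div]
  rw [div_mul_eq_div_div]
  calc (∫ ω, max (empFreq ξ (misclassified g) ω - α) 0 ∂μ) / (1 - α) - trimmedErr P α g
      ≤ (max (classErr P g - α) 0 + √(classErr P g) / √(2 * n)) / (1 - α)
          - max (classErr P g - α) 0 / (1 - α) := by gcongr; linarith
    _ = √(classErr P g) / √(2 * n) / (1 - α) := by ring

end
end
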